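/- arXiv:1009.0319 — 2 statements merged into one kernel-verified Lean document; each statement's English description precedes it below -/
import Mathlib

section
/- Let n ≥ 1, r > 0, let D ⊆ ℝⁿ be an open set, and let G be any grid of mesh r. If (D_k)_k denotes the family of connected components of D \ G, then the total new boundary area created inside D by cutting along the grid is at most twice the area of D on the grid: ∑_k H^{n−1}( D ∩ frontier(D_k) ) ≤ 2 · H^{n−1}(D ∩ G). -/
/-!
Let `U = D \ G`. A component of the open set `U` is open and closed in `U`, so its frontier
inside `D` lies on the grid. Points of the grid lying on two hyperplanes of different directions
form a countable union of codimension-two affine subspaces, hence are `μH[n-1]`-null. Any other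
point `x ∈ D ∩ G` has a ball around it meeting `G` only in one hyperplane, so the ball minus `G`
is two convex half-balls, and at most two components of `U` have `x` in their closure.
Integrating the pointwise bound `∑ₖ 𝟙_{D ∩ ∂Dₖ} ≤ 2 · 𝟙_{D ∩ G}` gives the inequality.
-/

open MeasureTheory Filter Set Metric Module
open scoped ENNReal Topology

theorem hausdorffMeasure_preimage_singleton_eq_zero {E F : Type*} [NormedAddCommGroup E]
    [NormedSpace ℝ E] [FiniteDimensional ℝ E] [MeasurableSpace E] [BorelSpace E]
    [AddCommGroup F] [Module ℝ F] [FiniteDimensional ℝ F]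
    (L : E →ₗ[ℝ] F) (hL : Function.Surjective L) {d : ℝ}
    (hd : (finrank ℝ E : ℝ) < d + finrank ℝ F) (y : F) :
    μH[d] (L ⁻¹' {y}) = 0 := by
  obtain ⟨c, rfl⟩ := hL y
  have hker : (finrank ℝ (LinearMap.ker L) : ℝ) < d := by
    have := L.finrank_range_add_finrank_ker
    rw [LinearMap.range_eq_top.2 hL, finrank_top] at this
    rw [← this] at hd
    push_cast at hd
    linarith
  have hfibre : L ⁻¹' {L c} = (fun u : LinearMap.ker L => c + (u : E)) '' univ := by
    ext x
    refine ⟨fun hx => ⟨⟨x - c, by simpa [sub_eq_zero] using hx⟩, trivial, by simp⟩, ?_⟩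
    rintro ⟨u, -, rfl⟩
    simp
  have hiso : Isometry fun u : LinearMap.ker L => c + (u : E) :=
    (IsometryEquiv.addLeft c).isometry.comp isometry_subtype_coe
  rw [hfibre, hiso.hausdorffMeasure_image
    (Or.inl ((Nat.cast_nonneg _).trans hker.le)), Real.hausdorffMeasure_of_finrank_lt hker]
  rfl

section ConnectedComponents

variable {α : Type*} [TopologicalSpace α]

def connectedComponentsIn (S : Set α) : Set (Set α) :=
  {C | ∃ x ∈ S, connectedComponentIn S x = C}

theorem eq_connectedComponentIn_of_mem_connectedComponentsIn {S C : Set α}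
    (hC : C ∈ connectedComponentsIn S) {y : α} (hy : y ∈ C) : C = connectedComponentIn S y := by
  obtain ⟨x, -, rfl⟩ := hC
  exact connectedComponentIn_eq hy

variable [LocallyConnectedSpace α] {U : Set α}

theorem IsOpen.countable_connectedComponentsIn [TopologicalSpace.SeparableSpace α]
    (hU : IsOpen U) : (connectedComponentsIn U).Countable := by
  refine PairwiseDisjoint.countable_of_isOpen (s := id) ?_ ?_ ?_
  · intro C hC C' hC' hne
    refine disjoint_left.2 fun y hyC hyC' => hne ?_
    rw [eq_connectedComponentIn_of_mem_connectedComponentsIn hC hyC,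
      eq_connectedComponentIn_of_mem_connectedComponentsIn hC' hyC']
  · rintro _ ⟨x, -, rfl⟩
    exact hU.connectedComponentIn
  · rintro _ ⟨x, hx, rfl⟩
    exact ⟨x, mem_connectedComponentIn hx⟩

theorem IsOpen.disjoint_frontier_of_mem_connectedComponentsIn (hU : IsOpen U) {C : Set α}
    (hC : C ∈ connectedComponentsIn U) : Disjoint (frontier C) U := by
  obtain ⟨x, -, rfl⟩ := hC
  refine disjoint_left.2 fun y hy hyU => ?_
  obtain ⟨w, hwy, hwx⟩ := mem_closure_iff.1 (frontier_subset_closure hy) _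
    hU.connectedComponentIn (mem_connectedComponentIn hyU)
  rw [hU.connectedComponentIn.frontier_eq, connectedComponentIn_eq hwx,
    ← connectedComponentIn_eq hwy] at hy
  exact hy.2 (mem_connectedComponentIn hyU)

end ConnectedComponents

theorem connectedComponentIn_eq_or_eq_of_mem_closure {E : Type*} [SeminormedAddCommGroup E]
    [NormedSpace ℝ E] {S : Set E} (f : E →ₗ[ℝ] ℝ) {x p q z : E} {ε : ℝ}
    (hS : ∀ y ∈ ball x ε, y ∈ S ↔ f y ≠ f x) (hp : p ∈ ball x ε) (hpx : f x < f p)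
    (hq : q ∈ ball x ε) (hqx : f q < f x) (hz : x ∈ closure (connectedComponentIn S z)) :
    connectedComponentIn S z = connectedComponentIn S p ∨
      connectedComponentIn S z = connectedComponentIn S q := by
  have hε : 0 < ε := pos_of_mem_ball hp
  have half_subset : ∀ H : Set E, Convex ℝ H → H ⊆ {y | f y ≠ f x} → ∀ w ∈ ball x ε ∩ H,
      ball x ε ∩ H ⊆ connectedComponentIn S w := fun H hH hHf w hw =>
    ((convex_ball x ε).inter hH).isPreconnected.subset_connectedComponentIn hw
      fun y hy => (hS y hy.1).2 (hHf hy.2)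
  obtain ⟨y, hyB, hyz⟩ := mem_closure_iff.1 hz _ isOpen_ball (mem_ball_self hε)
  rw [connectedComponentIn_eq hyz]
  rcases lt_or_gt_of_ne ((hS y hyB).1 (connectedComponentIn_subset S z hyz)) with hy | hy
  · right
    exact (connectedComponentIn_eq (half_subset _ (convex_halfSpace_lt f.isLinear _)
      (fun w hw => hw.ne) q ⟨hq, hqx⟩ ⟨hyB, hy⟩)).symm
  · left
    exact (connectedComponentIn_eq (half_subset _ (convex_halfSpace_gt f.isLinear _)
      (fun w hw => hw.ne') p ⟨hp, hpx⟩ ⟨hyB, hy⟩)).symm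

theorem tsum_measure_le_of_ae_encard_le {α ι : Type*} [MeasurableSpace α] [Countable ι]
    {μ : Measure α} {A : ι → Set α} {B : Set α} (hA : ∀ i, MeasurableSet (A i))
    (hB : MeasurableSet B) (hAB : ∀ i, A i ⊆ B) {m : ℕ}
    (hm : ∀ᵐ x ∂μ, x ∈ B → {i | x ∈ A i}.encard ≤ m) :
    ∑' i, μ (A i) ≤ m * μ B := by
  have hpoint : ∀ x, (x ∈ B → {i | x ∈ A i}.encard ≤ m) →
      ∑' i, (A i).indicator 1 x ≤ (m : ℝ≥0∞) * B.indicator 1 x := by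
    intro x hxm
    by_cases hx : x ∈ B
    · have : ∑' i, (A i).indicator (1 : α → ℝ≥0∞) x = {i | x ∈ A i}.encard := by
        rw [← ENNReal.tsum_set_one]
        exact (tsum_subtype {i | x ∈ A i} 1).symm
      rw [this, indicator_of_mem hx, Pi.one_apply, mul_one]
      exact_mod_cast hxm hx
    · simp [indicator_of_notMem (fun h => hx (hAB _ h)), indicator_of_notMem hx]
  calc ∑' i, μ (A i) = ∑' i, ∫⁻ x, (A i).indicator 1 x ∂μ := by
        simp_rw [lintegral_indicator_one (hA _)]
    _ = ∫⁻ x, ∑' i, (A i).indicator 1 x ∂μ :=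
        (lintegral_tsum fun i => (measurable_one.indicator (hA i)).aemeasurable).symm
    _ ≤ ∫⁻ x, m * B.indicator 1 x ∂μ := lintegral_mono_ae (hm.mono hpoint)
    _ = m * μ B := by rw [lintegral_const_mul _ (measurable_one.indicator hB),
        lintegral_indicator_one hB]

section Grid

variable {n : ℕ}

def grid (v : EuclideanSpace ℝ (Fin n)) (r : ℝ) : Set (EuclideanSpace ℝ (Fin n)) :=
  {x | ∃ i : Fin n, ∃ k : ℤ, x i = v i + r * k}

theorem isClosed_setOf_eq_add_mul_intCast (c r : ℝ) :
    IsClosed {t : ℝ | ∃ k : ℤ, t = c + r * k} := by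
  have : {t : ℝ | ∃ k : ℤ, t = c + r * k} = (· - c) ⁻¹' AddSubgroup.zmultiples r := by
    ext t
    simp [AddSubgroup.mem_zmultiples_iff, sub_eq_iff_eq_add', mul_comm, eq_comm]
  rw [this]
  exact AddSubgroup.isClosed_of_discrete.preimage (continuous_sub_right c)

theorem isClosed_grid (v : EuclideanSpace ℝ (Fin n)) (r : ℝ) : IsClosed (grid v r) := by
  have : grid v r = ⋃ i, (· i) ⁻¹' {t | ∃ k : ℤ, t = v i + r * k} := by
    ext x
    simp [grid]
  rw [this]
  exact isClosed_iUnion_of_finite fun i =>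
    (isClosed_setOf_eq_add_mul_intCast _ _).preimage (EuclideanSpace.proj (𝕜 := ℝ) i).continuous

theorem ae_eq_of_mem_grid_hyperplanes (v : EuclideanSpace ℝ (Fin n)) (r : ℝ) :
    ∀ᵐ x ∂(μH[(n : ℝ) - 1] : Measure (EuclideanSpace ℝ (Fin n))), ∀ i j : Fin n, ∀ k l : ℤ,
      x i = v i + r * k → x j = v j + r * l → i = j := by
  simp only [ae_all_iff]
  intro i j k l
  by_cases hij : i = j
  · exact Eventually.of_forall fun _ _ _ => hij
  have hsurj :
      Function.Surjective ((EuclideanSpace.projₗ (𝕜 := ℝ) i).prod (EuclideanSpace.projₗ j)) := by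
    rintro ⟨a, b⟩
    exact ⟨EuclideanSpace.single i a + EuclideanSpace.single j b, by simp [hij, Ne.symm hij]⟩
  have hdim : (finrank ℝ (EuclideanSpace ℝ (Fin n)) : ℝ) < (n - 1) + finrank ℝ (ℝ × ℝ) := by
    rw [finrank_euclideanSpace_fin, finrank_prod, finrank_self]
    push_cast
    linarith
  have hnull := hausdorffMeasure_preimage_singleton_eq_zero _ hsurj hdim (v i + r * k, v j + r * l)
  filter_upwards [measure_eq_zero_iff_ae_notMem.1 hnull] with x hx hxi hxj
  exact absurd (by simp [hxi, hxj]) hx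

theorem exists_ball_mem_sdiff_grid_iff {r : ℝ} (hr : 0 < r) {v : EuclideanSpace ℝ (Fin n)}
    {D : Set (EuclideanSpace ℝ (Fin n))} (hD : IsOpen D) {x : EuclideanSpace ℝ (Fin n)}
    (hxD : x ∈ D) {i : Fin n} {k : ℤ} (hx : x i = v i + r * k)
    (honly : ∀ j (l : ℤ), x j = v j + r * l → j = i) :
    ∃ ε > 0, ∀ y ∈ ball x ε, y ∈ D \ grid v r ↔ y i ≠ x i := by
  have hoff : ∀ j, ∀ᶠ y in 𝓝 x, j ≠ i → y j ∉ {t : ℝ | ∃ l : ℤ, t = v j + r * l} := by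
    intro j
    by_cases hj : j = i
    · exact Eventually.of_forall fun _ h => absurd hj h
    refine ((EuclideanSpace.proj (𝕜 := ℝ) j).continuous.continuousAt.eventually_mem
      ((isClosed_setOf_eq_add_mul_intCast _ _).isOpen_compl.mem_nhds ?_)).mono fun y hy _ => hy
    rintro ⟨l, hl⟩
    exact hj (honly j l hl)
  have hnear : ∀ᶠ y in 𝓝 x, |y i - x i| < r :=
    ((EuclideanSpace.proj (𝕜 := ℝ) i).continuous.sub continuous_const).abs.continuousAt
      |>.eventually_lt continuousAt_const (by simpa using hr)
  obtain ⟨ε, hε, hball⟩ := eventually_nhds_iff_ball.1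
    ((hD.eventually_mem hxD).and ((eventually_all.2 hoff).and hnear))
  refine ⟨ε, hε, fun y hy => ⟨fun hyU hyx => hyU.2 ⟨i, k, hyx.trans hx⟩, fun hyx => ?_⟩⟩
  obtain ⟨hyD, hyoff, hyi⟩ := hball y hy
  refine ⟨hyD, fun ⟨j, l, hl⟩ => ?_⟩
  obtain rfl : j = i := by_contra fun hj => hyoff j hj ⟨l, hl⟩
  rw [hl, hx, show v j + r * l - (v j + r * k) = r * ((l - k : ℤ) : ℝ) by push_cast; ring,
    abs_mul, abs_of_pos hr, mul_lt_iff_lt_one_right hr, ← Int.cast_abs] at hyi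
  have hlk : l = k := sub_eq_zero.1 (Int.abs_lt_one_iff.1 (by exact_mod_cast hyi))
  exact hyx (by rw [hl, hx, hlk])

theorem encard_mem_closure_connectedComponentsIn_sdiff_grid_le_two {r : ℝ} (hr : 0 < r)
    {v : EuclideanSpace ℝ (Fin n)} {D : Set (EuclideanSpace ℝ (Fin n))} (hD : IsOpen D)
    {x : EuclideanSpace ℝ (Fin n)} (hxD : x ∈ D) {i : Fin n} {k : ℤ} (hx : x i = v i + r * k)
    (honly : ∀ j (l : ℤ), x j = v j + r * l → j = i) :
    {C ∈ connectedComponentsIn (D \ grid v r) | x ∈ closure C}.encard ≤ 2 := by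
  obtain ⟨ε, hε, hball⟩ := exists_ball_mem_sdiff_grid_iff hr hD hxD hx honly
  have hshift : ∀ t, |t| < ε → x + EuclideanSpace.single i t ∈ ball x ε := fun t ht => by
    simpa [dist_eq_norm] using ht
  have hp := hshift (ε / 2) (by rw [abs_of_pos (by positivity)]; linarith)
  have hq := hshift (-(ε / 2)) (by rw [abs_neg, abs_of_pos (by positivity)]; linarith)
  calc _ ≤ ({connectedComponentIn (D \ grid v r) (x + EuclideanSpace.single i (ε / 2)),
        connectedComponentIn (D \ grid v r) (x + EuclideanSpace.single i (-(ε / 2)))} :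
          Set (Set (EuclideanSpace ℝ (Fin n)))).encard := by
        refine encard_le_encard ?_
        rintro C ⟨⟨z, -, rfl⟩, hxC⟩
        exact connectedComponentIn_eq_or_eq_of_mem_closure (EuclideanSpace.projₗ i) hball hp
          (by simpa using half_pos hε) hq (by simpa using half_pos hε) hxC
    _ ≤ 2 := (encard_insert_le _ _).trans (by rw [encard_singleton]; rfl)

end Grid

theorem stmt_4_general (n : ℕ) (r : ℝ) (hr : 0 < r)
    (D : Set (EuclideanSpace ℝ (Fin n))) (hD : IsOpen D)
    (G : Set (EuclideanSpace ℝ (Fin n)))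
    (hG : ∃ v : EuclideanSpace ℝ (Fin n),
      G = {x : EuclideanSpace ℝ (Fin n) | ∃ i : Fin n, ∃ k : ℤ, x i = v i + r * k}) :
    ∑' C : {C : Set (EuclideanSpace ℝ (Fin n)) //
        ∃ x ∈ D \ G, connectedComponentIn (D \ G) x = C},
        μH[(n : ℝ) - 1] (D ∩ frontier (C : Set (EuclideanSpace ℝ (Fin n)))) ≤
      2 * μH[(n : ℝ) - 1] (D ∩ G) := by
  obtain ⟨v, rfl⟩ := hG
  show ∑' C : connectedComponentsIn (D \ grid v r), μH[(n : ℝ) - 1] (D ∩ frontier C.1) ≤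
    2 * μH[(n : ℝ) - 1] (D ∩ grid v r)
  set U := D \ grid v r
  have hU : IsOpen U := hD.sdiff (isClosed_grid v r)
  have := hU.countable_connectedComponentsIn.to_subtype
  have hfrontier (C : connectedComponentsIn U) : D ∩ frontier C.1 ⊆ D ∩ grid v r :=
    fun x ⟨hxD, hxC⟩ => ⟨hxD, by_contra fun hxG =>
      (hU.disjoint_frontier_of_mem_connectedComponentsIn C.2).notMem_of_mem_left hxC ⟨hxD, hxG⟩⟩
  have hcount : ∀ᵐ x ∂μH[(n : ℝ) - 1], x ∈ D ∩ grid v r →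
      {C : connectedComponentsIn U | x ∈ D ∩ frontier C.1}.encard ≤ (2 : ℕ) := by
    filter_upwards [ae_eq_of_mem_grid_hyperplanes v r] with x hx ⟨hxD, i, k, hik⟩
    calc _ ≤ (Subtype.val ⁻¹' {C ∈ connectedComponentsIn U | x ∈ closure C} :
          Set (connectedComponentsIn U)).encard :=
          encard_le_encard fun C hC => ⟨C.2, frontier_subset_closure hC.2⟩
      _ ≤ _ := encard_preimage_val_le_encard_right _ _
      _ ≤ (2 : ℕ) := encard_mem_closure_connectedComponentsIn_sdiff_grid_le_two hr hD hxD hik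
          fun j l hjl => hx j i l k hjl hik
  exact (tsum_measure_le_of_ae_encard_le
    (fun C => hD.measurableSet.inter isClosed_frontier.measurableSet)
    (hD.measurableSet.inter (isClosed_grid v r).measurableSet) hfrontier hcount).trans_eq
    (by norm_num)

/-- Cutting `D` along a grid `G` creates inside `D` a total new boundary area
at most twice the area of `D` on the grid. -/
theorem stmt_4 (n : ℕ) (hn : 1 ≤ n) (r : ℝ) (hr : 0 < r)
    (D : Set (EuclideanSpace ℝ (Fin n))) (hD : IsOpen D)
    (G : Set (EuclideanSpace ℝ (Fin n)))
    (hG : ∃ v : EuclideanSpace ℝ (Fin n),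
      G = {x : EuclideanSpace ℝ (Fin n) | ∃ i : Fin n, ∃ k : ℤ, x i = v i + r * k}) :
    ∑' C : {C : Set (EuclideanSpace ℝ (Fin n)) //
        ∃ x ∈ D \ G, connectedComponentIn (D \ G) x = C},
        μH[(n : ℝ) - 1] (D ∩ frontier (C : Set (EuclideanSpace ℝ (Fin n)))) ≤
      2 * μH[(n : ℝ) - 1] (D ∩ G) :=
  stmt_4_general n r hr D hD G hG
end

section
/- Let n ≥ 2 be an integer and let f_{j,k} ∈ [0,1] (for j, k ∈ ℕ) be numbers such that for every j the family (f_{j,k})_k is summable with ∑_k f_{j,k} = 1. If limsup_{j→∞} ∑_k f_{j,k}^{(n−1)/n} ≤ 1 (where the sums of powers are taken in [0,∞]), then lim_{j→∞} sup_k f_{j,k} = 1. -/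
open MeasureTheory Filter
open scoped ENNReal

/-- If `f_{j,k} ∈ [0,1]`, each row sums to `1`, and
`limsup_j ∑_k f_{j,k}^{(n-1)/n} ≤ 1` (sums in `[0,∞]`), then `sup_k f_{j,k} → 1`. -/
theorem stmt_8 (n : ℕ) (hn : 2 ≤ n) (f : ℕ → ℕ → ℝ)
    (hf01 : ∀ j k, f j k ∈ Set.Icc (0 : ℝ) 1)
    (hsum : ∀ j, Summable (f j)) (hone : ∀ j, ∑' k, f j k = 1)
    (hlimsup :
      Filter.limsup
        (fun j => ∑' k, ENNReal.ofReal (f j k ^ (((n : ℝ) - 1) / n))) Filter.atTop ≤ 1) :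
    Filter.Tendsto (fun j => ⨆ k, f j k) Filter.atTop (nhds 1) := by
  set p : ℝ := ((n : ℝ) - 1) / n with hp
  have hn0 : (0 : ℝ) < n := by positivity
  have hp1 : p < 1 := by
    rw [hp, div_lt_one hn0]; linarith
  have hq : p - 1 < 0 := by linarith
  set M : ℕ → ℝ := fun j => ⨆ k, f j k with hM
  have hbdd : ∀ j, BddAbove (Set.range (f j)) := fun j =>
    ⟨1, by rintro x ⟨k, rfl⟩; exact (hf01 j k).2⟩
  have hMle : ∀ j k, f j k ≤ M j := fun j k => le_ciSup (hbdd j) k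
  have hM1 : ∀ j, M j ≤ 1 := fun j => ciSup_le fun k => (hf01 j k).2
  have hp0 : 0 < p := by
    rw [hp]
    apply div_pos _ hn0
    have : (2:ℝ) ≤ n := by exact_mod_cast hn
    linarith
  have hM0 : ∀ j, 0 < M j := by
    intro j
    by_contra h
    push_neg at h
    have hz : ∀ k, f j k = 0 := fun k =>
      le_antisymm (le_trans (hMle j k) h) (hf01 j k).1
    have h2 : ∑' k, f j k = (0:ℝ) := by simp [hz]
    rw [hone j] at h2
    exact one_ne_zero h2
  -- key pointwise bound
  have key : ∀ j, ENNReal.ofReal ((M j) ^ (p - 1)) ≤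
      ∑' k, ENNReal.ofReal (f j k ^ p) := by
    intro j
    have hterm : ∀ k, (M j) ^ (p - 1) * f j k ≤ f j k ^ p := by
      intro k
      rcases eq_or_lt_of_le (hf01 j k).1 with h0 | h0
      · rw [← h0, mul_zero, Real.zero_rpow (ne_of_gt hp0)]
      · have h1 : (M j) ^ (p - 1) ≤ (f j k) ^ (p - 1) :=
          Real.rpow_le_rpow_of_nonpos h0 (hMle j k) hq.le
        calc (M j) ^ (p - 1) * f j k ≤ (f j k) ^ (p - 1) * f j k := by
              exact mul_le_mul_of_nonneg_right h1 (hf01 j k).1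
          _ = f j k ^ p := by
              have hadd := Real.rpow_add h0 (p - 1) 1
              rw [Real.rpow_one] at hadd
              rw [← hadd, sub_add_cancel]
    have hsum' : Summable (fun k => (M j) ^ (p - 1) * f j k) := (hsum j).mul_left _
    have heq : ∑' k, (M j) ^ (p - 1) * f j k = (M j) ^ (p - 1) := by
      rw [tsum_mul_left, hone j, mul_one]
    calc ENNReal.ofReal ((M j) ^ (p - 1))
        = ∑' k, ENNReal.ofReal ((M j) ^ (p - 1) * f j k) := by
          conv_lhs => rw [← heq]
          exact ENNReal.ofReal_tsum_of_nonneg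
            (fun k => mul_nonneg (Real.rpow_nonneg (hM0 j).le _) (hf01 j k).1) hsum'
      _ ≤ ∑' k, ENNReal.ofReal (f j k ^ p) :=
          ENNReal.tsum_le_tsum fun k => ENNReal.ofReal_le_ofReal (hterm k)
  have hge1 : ∀ j, (1 : ℝ≥0∞) ≤ ENNReal.ofReal ((M j) ^ (p - 1)) := by
    intro j
    have := Real.one_le_rpow_of_pos_of_le_one_of_nonpos (hM0 j) (hM1 j) hq.le
    calc (1 : ℝ≥0∞) = ENNReal.ofReal 1 := by simp
      _ ≤ _ := ENNReal.ofReal_le_ofReal this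
  have hlimsup' : limsup (fun j => ENNReal.ofReal ((M j) ^ (p - 1))) atTop ≤ 1 :=
    le_trans (Filter.limsup_le_limsup (Filter.Eventually.of_forall key)) hlimsup
  have hliminf' : (1 : ℝ≥0∞) ≤ liminf (fun j => ENNReal.ofReal ((M j) ^ (p - 1))) atTop :=
    Filter.le_liminf_of_le (by isBoundedDefault) (Filter.Eventually.of_forall hge1)
  have htend : Tendsto (fun j => ENNReal.ofReal ((M j) ^ (p - 1))) atTop (nhds 1) :=
    tendsto_of_le_liminf_of_limsup_le hliminf' hlimsup'
  have htendR : Tendsto (fun j => (M j) ^ (p - 1)) atTop (nhds 1) := by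
    have h := (ENNReal.tendsto_toReal (by simp : (1 : ℝ≥0∞) ≠ ⊤)).comp htend
    have he : (fun j => ENNReal.toReal (ENNReal.ofReal ((M j) ^ (p - 1)))) =
        fun j => (M j) ^ (p - 1) := by
      funext j; exact ENNReal.toReal_ofReal (Real.rpow_nonneg (hM0 j).le _)
    rw [Function.comp_def, he] at h
    simpa using h
  have hcont : ContinuousAt (fun x : ℝ => x ^ (1 / (p - 1))) 1 :=
    Real.continuousAt_rpow_const 1 _ (Or.inl one_ne_zero)
  have htendM := hcont.tendsto.comp htendR
  have hid : (fun j => ((M j) ^ (p - 1)) ^ (1 / (p - 1))) = fun j => M j := by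
    funext j
    rw [← Real.rpow_mul (hM0 j).le, mul_one_div_cancel (by linarith : p - 1 ≠ 0),
      Real.rpow_one]
  rw [Function.comp_def, hid] at htendM
  simpa [Real.one_rpow] using htendM
end
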